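/- arXiv:1408.1234 — 8 statements merged into one kernel-verified Lean document; each statement's English description precedes it below -/
import Mathlib

section
/- The function ψ ↦ log J(ψ) is strongly convex with parameter A_1 = (1−ν)/ω²; that is, its Hessian satisfies ∇² log J(ψ) ⪰ A_1 I_n for all ψ ∈ R^n. -/
open Real Finset

/-! On the line `ψ + t • v` every exponent in `J` is a quadratic in `t` with the same leading
coefficient `(1 - ν) ‖v‖² / (2 ω²)`. Factoring out its exponential, `log J` becomes that quadratic
plus a log-sum-exp of affine functions of `t`, which is convex: its second derivative is the
variance of the slopes under the exponentially tilted weights (Cauchy–Schwarz). -/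

theorem iteratedFDeriv_apply_const_eq_iteratedDeriv {𝕜 E F : Type*} [NontriviallyNormedField 𝕜]
    [NormedAddCommGroup E] [NormedSpace 𝕜 E] [NormedAddCommGroup F] [NormedSpace 𝕜 F]
    {k : ℕ} {g : E → F} (hg : ContDiff 𝕜 k g) (x v : E) :
    iteratedFDeriv 𝕜 k g x (fun _ => v) = iteratedDeriv k (fun t : 𝕜 => g (x + t • v)) 0 := by
  have hcomp := (ContinuousLinearMap.smulRight (1 : 𝕜 →L[𝕜] 𝕜) v).iteratedFDeriv_comp_right
    (hg.comp ((contDiff_const (c := x)).add contDiff_id)) 0 le_rfl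
  rw [iteratedDeriv_eq_iteratedFDeriv]
  simp only [id_eq, Function.comp_def, ContinuousLinearMap.smulRight_apply, one_apply_eq_self,
    zero_smul] at hcomp
  rw [hcomp, iteratedFDeriv_comp_add_left]
  simp

theorem norm_add_smul_sq {E : Type*} [NormedAddCommGroup E] [InnerProductSpace ℝ E]
    (x v : E) (t : ℝ) : ‖x + t • v‖ ^ 2 = ‖x‖ ^ 2 + 2 * inner ℝ x v * t + ‖v‖ ^ 2 * t ^ 2 := by
  rw [norm_add_sq_real, real_inner_smul_right, norm_smul, Real.norm_eq_abs, mul_pow, sq_abs]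
  ring

section LogSumExp

variable {ι : Type*} [Fintype ι]

theorem hasDerivAt_sum_mul_exp_mul (p b : ι → ℝ) (t : ℝ) :
    HasDerivAt (fun t => ∑ j, p j * exp (b j * t)) (∑ j, p j * b j * exp (b j * t)) t :=
  HasDerivAt.fun_sum fun j _ =>
    ((((hasDerivAt_id' t).const_mul (b j)).exp).const_mul (p j)).congr_deriv (by ring)

theorem sum_mul_exp_mul_pos [Nonempty ι] {p : ι → ℝ} (hp : ∀ j, 0 < p j) (b : ι → ℝ) (t : ℝ) :
    0 < ∑ j, p j * exp (b j * t) :=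
  sum_pos (fun j _ => mul_pos (hp j) (exp_pos _)) univ_nonempty

theorem iteratedDeriv_two_log_sum_mul_exp_mul_nonneg [Nonempty ι] {p : ι → ℝ} (hp : ∀ j, 0 < p j)
    (b : ι → ℝ) (t : ℝ) :
    0 ≤ iteratedDeriv 2 (fun t => log (∑ j, p j * exp (b j * t))) t := by
  set Z : (ι → ℝ) → ℝ → ℝ := fun q t => ∑ j, q j * exp (b j * t)
  have hZ : ∀ q t, HasDerivAt (Z q) (Z (q * b) t) t := fun q t => hasDerivAt_sum_mul_exp_mul q b t
  have hpos : ∀ t, 0 < Z p t := sum_mul_exp_mul_pos hp b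
  have hlog : deriv (fun t => log (Z p t)) = fun t => Z (p * b) t / Z p t :=
    funext fun t => ((hZ p t).log (hpos t).ne').deriv
  -- the second derivative is the variance of `b` under the weights `p j * exp (b j * t)`
  have hcs : Z (p * b) t ^ 2 ≤ Z p t * Z (p * b * b) t := by
    refine sum_sq_le_sum_mul_sum_of_sq_le_mul _ (fun j _ => (mul_pos (hp j) (exp_pos _)).le)
      (fun j _ => ?_) (fun j _ => le_of_eq ?_)
    · simp only [Pi.mul_apply]
      nlinarith [mul_nonneg (mul_nonneg (hp j).le (mul_self_nonneg (b j))) (exp_pos (b j * t)).le]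
    · simp only [Pi.mul_apply]; ring
  rw [iteratedDeriv_succ, iteratedDeriv_one, hlog, ((hZ _ t).fun_div (hZ p t) (hpos t).ne').deriv]
  exact div_nonneg (by nlinarith) (sq_nonneg _)

theorem log_sum_mul_exp_quadratic [Nonempty ι] {p : ι → ℝ} (hp : ∀ j, 0 < p j)
    (a b : ι → ℝ) (c t : ℝ) :
    log (∑ j, p j * exp (a j + b j * t + c * t ^ 2)) =
      c * t ^ 2 + log (∑ j, p j * exp (a j) * exp (b j * t)) := by
  have hfactor : ∑ j, p j * exp (a j + b j * t + c * t ^ 2) =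
      exp (c * t ^ 2) * ∑ j, p j * exp (a j) * exp (b j * t) := by
    rw [mul_sum]
    refine sum_congr rfl fun j _ => ?_
    rw [exp_add, exp_add]; ring
  have hsum := sum_mul_exp_mul_pos (fun j => mul_pos (hp j) (exp_pos (a j))) b t
  rw [hfactor, log_mul (exp_pos _).ne' hsum.ne', log_exp]

theorem two_mul_le_iteratedDeriv_two_log_sum_mul_exp_quadratic [Nonempty ι] {p : ι → ℝ}
    (hp : ∀ j, 0 < p j) (a b : ι → ℝ) (c t : ℝ) :
    2 * c ≤ iteratedDeriv 2 (fun t => log (∑ j, p j * exp (a j + b j * t + c * t ^ 2))) t := by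
  have hq : ∀ j, 0 < p j * exp (a j) := fun j => mul_pos (hp j) (exp_pos _)
  have hsmooth : ContDiff ℝ 2 fun t => log (∑ j, p j * exp (a j) * exp (b j * t)) :=
    (by fun_prop : ContDiff ℝ 2 _).log fun t => (sum_mul_exp_mul_pos hq b t).ne'
  simp_rw [log_sum_mul_exp_quadratic hp]
  rw [iteratedDeriv_fun_add (by fun_prop) hsmooth.contDiffAt]
  simp only [iteratedDeriv_const_mul_field, iteratedDeriv_pow, Nat.descFactorial_succ,
    Nat.add_one_sub_one, tsub_zero, Nat.descFactorial_zero, mul_one, one_mul, Nat.cast_ofNat,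
    tsub_self, pow_zero]
  linarith [iteratedDeriv_two_log_sum_mul_exp_mul_nonneg hq b t]

end LogSumExp

theorem logJ_strongly_convex_general (n M : ℕ) (Y : EuclideanSpace ℝ (Fin n))
    (f : Fin M → EuclideanSpace ℝ (Fin n)) (pi : Fin M → ℝ)
    (hpi : ∀ j, 0 < pi j) (hpi1 : ∑ j, pi j = 1)
    (ν ω : ℝ)
    (J : EuclideanSpace ℝ (Fin n) → ℝ)
    (hJ : ∀ ψ, J ψ = ∑ j, pi j *
      Real.exp (-‖f j - Y‖^2 / (2*ω^2) + (1-ν) * ‖ψ - f j‖^2 / (2*ω^2))) :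
    ∀ ψ v, ((1-ν)/ω^2) * ‖v‖^2 ≤
      iteratedFDeriv ℝ 2 (fun ψ => Real.log (J ψ)) ψ ![v, v] := by
  have : Nonempty (Fin M) :=
    univ_nonempty_iff.mp (nonempty_of_sum_ne_zero (hpi1 ▸ one_ne_zero))
  have hJpos : ∀ ψ, 0 < J ψ := fun ψ => hJ ψ ▸
    sum_pos (fun j _ => mul_pos (hpi j) (exp_pos _)) univ_nonempty
  have hJsmooth : ContDiff ℝ 2 J := by
    have := fun j => (contDiff_id.sub (contDiff_const (c := f j))).norm_sq ℝ (n := 2)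
    rw [funext hJ]
    fun_prop
  intro ψ v
  have hline : (fun t : ℝ => log (J (ψ + t • v))) = fun t => log (∑ j, pi j *
      exp ((-‖f j - Y‖ ^ 2 + (1 - ν) * ‖ψ - f j‖ ^ 2) / (2 * ω ^ 2) +
        (1 - ν) * inner ℝ (ψ - f j) v / ω ^ 2 * t + (1 - ν) * ‖v‖ ^ 2 / (2 * ω ^ 2) * t ^ 2)) := by
    funext t
    rw [hJ]
    congr 1
    refine sum_congr rfl fun j _ => ?_
    rw [add_sub_right_comm, norm_add_smul_sq]
    ring_nf
  have hvv : ![v, v] = fun _ => v := by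
    funext i; fin_cases i <;> rfl
  rw [hvv, iteratedFDeriv_apply_const_eq_iteratedDeriv (hJsmooth.log fun ψ => (hJpos ψ).ne'), hline]
  calc (1 - ν) / ω ^ 2 * ‖v‖ ^ 2 = 2 * ((1 - ν) * ‖v‖ ^ 2 / (2 * ω ^ 2)) := by ring
    _ ≤ _ := two_mul_le_iteratedDeriv_two_log_sum_mul_exp_quadratic hpi _ _ _ _

theorem logJ_strongly_convex (n M : ℕ) (Y : EuclideanSpace ℝ (Fin n))
    (f : Fin M → EuclideanSpace ℝ (Fin n)) (pi : Fin M → ℝ)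
    (hpi : ∀ j, 0 < pi j) (hpi1 : ∑ j, pi j = 1)
    (ν ω : ℝ) (hν : ν ∈ Set.Ioo (0:ℝ) 1) (hω : 0 < ω)
    (J : EuclideanSpace ℝ (Fin n) → ℝ)
    (hJ : ∀ ψ, J ψ = ∑ j, pi j *
      Real.exp (-‖f j - Y‖^2 / (2*ω^2) + (1-ν) * ‖ψ - f j‖^2 / (2*ω^2))) :
    ∀ ψ v, ((1-ν)/ω^2) * ‖v‖^2 ≤
      iteratedFDeriv ℝ 2 (fun ψ => Real.log (J ψ)) ψ ![v, v] :=
  logJ_strongly_convex_general n M Y f pi hpi hpi1 ν ω J hJ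
end

section
/- If in addition ‖f_j‖ ≤ L for all j = 1,...,M, then the Hessian of log J satisfies ∇² log J(ψ) ⪯ A_2 I_n for all ψ ∈ R^n, where A_2 = (1−ν)/ω² + ((1−ν)/ω²)² L². -/
/-!
Along the line `t ↦ ψ + t • v` every exponent `a/2 ‖ψ + t v - f_j‖²` is a quadratic in `t` with the
same leading coefficient `a‖v‖²/2`. Hence the second derivative of `log J` in direction `v` is
`a‖v‖²` plus `a²` times the variance of `⟪f_j, v⟫` under the posterior weights, and that variance is
at most the second moment, i.e. at most `L²‖v‖²`.
-/

open Real Finset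

section LineRestriction

variable {E F : Type*} [NormedAddCommGroup E] [NormedSpace ℝ E]
  [NormedAddCommGroup F] [NormedSpace ℝ F]

theorem iteratedFDeriv_apply_const_eq_iteratedDeriv_line {n : ℕ} {g : E → F}
    (hg : ContDiff ℝ n g) (x v : E) :
    iteratedFDeriv ℝ n g x (fun _ => v) = iteratedDeriv n (fun t : ℝ => g (x + t • v)) 0 := by
  have hcomp : (fun t : ℝ => g (x + t • v)) =
      (fun z => g (x + z)) ∘ ContinuousLinearMap.smulRight (1 : ℝ →L[ℝ] ℝ) v := by
    ext t; simp
  have hshift : ContDiff ℝ n (fun z => g (x + z)) := hg.comp (contDiff_const.add contDiff_id)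
  rw [iteratedDeriv_eq_iteratedFDeriv, hcomp,
    ContinuousLinearMap.iteratedFDeriv_comp_right _ hshift _ le_rfl, iteratedFDeriv_comp_add_left]
  simp

end LineRestriction

theorem deriv_deriv_log {S S' : ℝ → ℝ} {S'' t₀ : ℝ} (hS : ∀ t, HasDerivAt S (S' t) t)
    (hS' : HasDerivAt S' S'' t₀) (hS0 : ∀ t, S t ≠ 0) :
    deriv (deriv fun t => log (S t)) t₀ = (S'' * S t₀ - S' t₀ ^ 2) / S t₀ ^ 2 := by
  have hlog : deriv (fun t => log (S t)) = fun t => S' t / S t :=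
    funext fun t => ((hS t).log (hS0 t)).deriv
  rw [hlog, sq (S' t₀)]
  exact (hS'.div (hS t₀) (hS0 t₀)).deriv

section WeightedSums

variable {ι : Type*} [Fintype ι]

theorem sum_mul_sum_mul_sq_sub_sq_le {u b : ι → ℝ} (hu : ∀ j, 0 ≤ u j) {m K : ℝ}
    (hb : ∀ j, (b j - m) ^ 2 ≤ K) :
    (∑ j, u j) * (∑ j, u j * b j ^ 2) - (∑ j, u j * b j) ^ 2 ≤ K * (∑ j, u j) ^ 2 := by
  set T := ∑ j, u j
  have hcentered : T * (∑ j, u j * b j ^ 2) - (∑ j, u j * b j) ^ 2 =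
      T * (∑ j, u j * (b j - m) ^ 2) - (∑ j, u j * (b j - m)) ^ 2 := by
    have h2 : ∀ j, u j * (b j - m) ^ 2 = u j * b j ^ 2 - 2 * m * (u j * b j) + m ^ 2 * u j :=
      fun j => by ring
    have h1 : ∀ j, u j * (b j - m) = u j * b j - m * u j := fun j => by ring
    simp only [h2, h1, sum_add_distrib, sum_sub_distrib, ← mul_sum]
    ring
  have hsecond : ∑ j, u j * (b j - m) ^ 2 ≤ K * T := by
    rw [mul_comm, sum_mul]
    exact sum_le_sum fun j _ => mul_le_mul_of_nonneg_left (hb j) (hu j)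
  have hT : 0 ≤ T := sum_nonneg fun j _ => hu j
  rw [hcentered]
  nlinarith [sq_nonneg (∑ j, u j * (b j - m)), mul_le_mul_of_nonneg_left hsecond hT]

theorem deriv_deriv_log_sum_exp_quadratic [Nonempty ι] {u : ι → ℝ} (hu : ∀ j, 0 < u j)
    (β : ι → ℝ) (γ : ℝ) :
    deriv (deriv fun t => log (∑ j, u j * exp (β j * t + γ * t ^ 2))) 0 =
      2 * γ + ((∑ j, u j) * (∑ j, u j * β j ^ 2) - (∑ j, u j * β j) ^ 2) / (∑ j, u j) ^ 2 := by
  have hq : ∀ j t, HasDerivAt (fun t => β j * t + γ * t ^ 2) (β j + 2 * γ * t) t := fun j t =>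
    (((hasDerivAt_id t).const_mul (β j)).add ((hasDerivAt_pow 2 t).const_mul γ)).congr_deriv
      (by simp; ring)
  have hS : ∀ t, HasDerivAt (fun t => ∑ j, u j * exp (β j * t + γ * t ^ 2))
      (∑ j, u j * ((β j + 2 * γ * t) * exp (β j * t + γ * t ^ 2))) t := fun t =>
    HasDerivAt.fun_sum fun j _ => by
      simpa [mul_comm] using ((hq j t).exp).const_mul (u j)
  have hS' : HasDerivAt (fun t => ∑ j, u j * ((β j + 2 * γ * t) * exp (β j * t + γ * t ^ 2)))
      (∑ j, u j * (β j ^ 2 + 2 * γ)) 0 := by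
    refine HasDerivAt.fun_sum fun j _ => ?_
    have hlin : HasDerivAt (fun t => β j + 2 * γ * t) (2 * γ) 0 := by
      simpa using ((hasDerivAt_id (0 : ℝ)).const_mul (2 * γ)).const_add (β j)
    exact ((hlin.mul (hq j 0).exp).const_mul (u j)).congr_deriv (by
      simp only [mul_zero, add_zero, ne_eq, OfNat.ofNat_ne_zero, not_false_eq_true, zero_pow,
        exp_zero]
      ring)
  have hpos : ∀ t, ∑ j, u j * exp (β j * t + γ * t ^ 2) ≠ 0 := fun t =>
    (sum_pos (fun j _ => mul_pos (hu j) (exp_pos _)) univ_nonempty).ne'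
  have hT : ∑ j, u j ≠ 0 := (sum_pos (fun j _ => hu j) univ_nonempty).ne'
  rw [deriv_deriv_log hS hS' hpos]
  simp only [mul_zero, add_zero, ne_eq, OfNat.ofNat_ne_zero, not_false_eq_true,
    zero_pow, exp_zero, mul_one]
  simp only [mul_add, sum_add_distrib, ← sum_mul]
  field_simp
  ring

end WeightedSums

section SumExpSqNorm

variable {ι E : Type*} [Fintype ι] [NormedAddCommGroup E] [InnerProductSpace ℝ E]

theorem sum_exp_sq_norm_add_smul_sub (c : ι → ℝ) (f : ι → E) (a : ℝ) (ψ v : E) (t : ℝ) :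
    ∑ j, c j * exp (a / 2 * ‖ψ + t • v - f j‖ ^ 2) =
      ∑ j, c j * exp (a / 2 * ‖ψ - f j‖ ^ 2) *
        exp (a * inner ℝ (ψ - f j) v * t + a / 2 * ‖v‖ ^ 2 * t ^ 2) := by
  refine sum_congr rfl fun j _ => ?_
  rw [add_sub_right_comm, norm_add_sq_real, real_inner_smul_right, norm_smul, mul_pow,
    Real.norm_eq_abs, sq_abs, mul_assoc, ← exp_add]
  ring_nf

theorem iteratedFDeriv_two_log_sum_exp_sq_norm_le [Nonempty ι] {c : ι → ℝ} (hc : ∀ j, 0 < c j)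
    {f : ι → E} {L : ℝ} (hL : ∀ j, ‖f j‖ ≤ L) (a : ℝ) (ψ v : E) :
    iteratedFDeriv ℝ 2 (fun x => log (∑ j, c j * exp (a / 2 * ‖x - f j‖ ^ 2))) ψ ![v, v] ≤
      (a + a ^ 2 * L ^ 2) * ‖v‖ ^ 2 := by
  set u : ι → ℝ := fun j => c j * exp (a / 2 * ‖ψ - f j‖ ^ 2)
  set β : ι → ℝ := fun j => a * inner ℝ (ψ - f j) v
  have hu : ∀ j, 0 < u j := fun j => mul_pos (hc j) (exp_pos _)
  have hsmooth : ContDiff ℝ 2 fun x => log (∑ j, c j * exp (a / 2 * ‖x - f j‖ ^ 2)) := by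
    refine (ContDiff.sum fun j _ => contDiff_const.mul ?_).log fun x =>
      (sum_pos (fun j _ => mul_pos (hc j) (exp_pos _)) univ_nonempty).ne'
    exact (contDiff_const.mul ((contDiff_id.sub contDiff_const).norm_sq ℝ)).exp
  have hvv : ![v, v] = fun _ => v := by
    ext i; fin_cases i <;> rfl
  have hβ : ∀ j, (β j - a * inner ℝ ψ v) ^ 2 ≤ a ^ 2 * (L ^ 2 * ‖v‖ ^ 2) := fun j => by
    have hinner : inner ℝ (f j) v ^ 2 ≤ L ^ 2 * ‖v‖ ^ 2 := by
      rw [← mul_pow, ← sq_abs]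
      exact pow_le_pow_left₀ (abs_nonneg _) ((abs_real_inner_le_norm _ _).trans
        (mul_le_mul_of_nonneg_right (hL j) (norm_nonneg v))) 2
    calc (β j - a * inner ℝ ψ v) ^ 2 = a ^ 2 * inner ℝ (f j) v ^ 2 := by
          simp only [β, inner_sub_left]; ring
      _ ≤ a ^ 2 * (L ^ 2 * ‖v‖ ^ 2) := mul_le_mul_of_nonneg_left hinner (sq_nonneg a)
  have hvar := sum_mul_sum_mul_sq_sub_sq_le (fun j => (hu j).le) hβ
  have hT : 0 < (∑ j, u j) ^ 2 := pow_pos (sum_pos (fun j _ => hu j) univ_nonempty) 2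
  rw [hvv, iteratedFDeriv_apply_const_eq_iteratedDeriv_line hsmooth, iteratedDeriv_succ,
    iteratedDeriv_one]
  simp only [sum_exp_sq_norm_add_smul_sub]
  rw [deriv_deriv_log_sum_exp_quadratic hu]
  linarith [div_le_of_le_mul₀ hT.le (by positivity) hvar]

end SumExpSqNorm

theorem logJ_smooth_general (n M : ℕ) (Y : EuclideanSpace ℝ (Fin n))
    (f : Fin M → EuclideanSpace ℝ (Fin n)) (pi : Fin M → ℝ) (L : ℝ)
    (hL : ∀ j, ‖f j‖ ≤ L)
    (hpi : ∀ j, 0 < pi j) (hpi1 : ∑ j, pi j = 1)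
    (ν ω : ℝ)
    (J : EuclideanSpace ℝ (Fin n) → ℝ)
    (hJ : ∀ ψ, J ψ = ∑ j, pi j *
      Real.exp (-‖f j - Y‖^2 / (2*ω^2) + (1-ν) * ‖ψ - f j‖^2 / (2*ω^2))) :
    ∀ ψ v, iteratedFDeriv ℝ 2 (fun ψ => Real.log (J ψ)) ψ ![v, v]
      ≤ ((1-ν)/ω^2 + ((1-ν)/ω^2)^2 * L^2) * ‖v‖^2 := by
  intro ψ v
  have : Nonempty (Fin M) := ⟨⟨0, Nat.pos_of_ne_zero (by rintro rfl; simp at hpi1)⟩⟩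
  have hJ' : J = fun x => ∑ j, pi j * exp (-‖f j - Y‖ ^ 2 / (2 * ω ^ 2)) *
      exp ((1 - ν) / ω ^ 2 / 2 * ‖x - f j‖ ^ 2) := funext fun x => by
    rw [hJ]
    refine sum_congr rfl fun j _ => ?_
    rw [mul_assoc, ← exp_add]
    ring_nf
  subst hJ'
  exact iteratedFDeriv_two_log_sum_exp_sq_norm_le (fun j => mul_pos (hpi j) (exp_pos _)) hL _ ψ v

theorem logJ_smooth (n M : ℕ) (Y : EuclideanSpace ℝ (Fin n))
    (f : Fin M → EuclideanSpace ℝ (Fin n)) (pi : Fin M → ℝ) (L : ℝ)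
    (hL : ∀ j, ‖f j‖ ≤ L)
    (hpi : ∀ j, 0 < pi j) (hpi1 : ∑ j, pi j = 1)
    (ν ω : ℝ) (hν : ν ∈ Set.Ioo (0:ℝ) 1) (hω : 0 < ω)
    (J : EuclideanSpace ℝ (Fin n) → ℝ)
    (hJ : ∀ ψ, J ψ = ∑ j, pi j *
      Real.exp (-‖f j - Y‖^2 / (2*ω^2) + (1-ν) * ‖ψ - f j‖^2 / (2*ω^2))) :
    ∀ ψ v, iteratedFDeriv ℝ 2 (fun ψ => Real.log (J ψ)) ψ ![v, v]
      ≤ ((1-ν)/ω^2 + ((1-ν)/ω^2)^2 * L^2) * ‖v‖^2 :=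
  logJ_smooth_general n M Y f pi L hL hpi hpi1 ν ω J hJ
end

section
/- The Hessian of log J satisfies the exact identity ∇² log J(ψ) = ((1−ν)/ω²) I_n + ((1−ν)/ω²)² ∑_{j=1}^M λ_j (f_λ − f_j)(f_λ − f_j)^⊤, where λ_j ∝ π_j exp(−‖f_j − Y‖²/(2ω²) + (1−ν)‖ψ − f_j‖²/(2ω²)) and f_λ = ∑_j λ_j f_j. -/
/-!
With `c = (1 - ν) / ω²` and `p_j = π_j exp (-‖f_j - Y‖² / (2ω²))`, `J` is the partition function
`Z ψ = ∑ p_j exp (c/2 ‖ψ - f_j‖²)` of an exponentially tilted family, `λ` its Gibbs weights and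
`f_λ` their mean. Differentiating the weights gives `dλ_j = c λ_j ⟪f_λ - f_j, ·⟫`, so the gradient
of `log Z` is `c (ψ - f_λ)` and `d f_λ = c ∑ λ_j ⟪f_λ - f_j, ·⟫ f_j`. Since `∑ λ_j (f_λ - f_j) = 0`,
`f_j` may be replaced by `f_j - f_λ` in the last sum, which turns the second derivative of `log Z`
into `c` times the identity plus `c²` times the covariance of the `f_j` under `λ`.
-/

open Real Finset RealInnerProductSpace

theorem iteratedFDeriv_two_apply_eq_fderiv_fderiv_apply {𝕜 E F : Type*}
    [NontriviallyNormedField 𝕜] [NormedAddCommGroup E] [NormedSpace 𝕜 E] [NormedAddCommGroup F]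
    [NormedSpace 𝕜 F] {g : E → F} {x : E} (hg : DifferentiableAt 𝕜 (fderiv 𝕜 g) x) (v w : E) :
    iteratedFDeriv 𝕜 2 g x ![v, w] = fderiv 𝕜 (fun y => fderiv 𝕜 g y w) x v := by
  rw [iteratedFDeriv_two_apply, fderiv_clm_apply hg (differentiableAt_const w)]
  simp

section WeightedMean

variable {E ι : Type*} [NormedAddCommGroup E] [InnerProductSpace ℝ E] [Fintype ι]

theorem sum_mul_inner_mean_sub_eq_zero (q : ι → ℝ) (x : ι → E) (hq : ∑ j, q j = 1) (v : E) :
    ∑ j, q j * ⟪∑ k, q k • x k - x j, v⟫ = 0 := by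
  simp only [inner_sub_left, mul_sub, sum_sub_distrib, ← sum_mul, hq, one_mul, sum_inner,
    real_inner_smul_left, sub_self]

theorem sum_mul_inner_mean_sub_mul_inner (q : ι → ℝ) (x : ι → E) (hq : ∑ j, q j = 1)
    (v w : E) :
    ∑ j, q j * (⟪∑ k, q k • x k - x j, v⟫ * ⟪x j, w⟫) =
      -∑ j, q j * (⟪∑ k, q k • x k - x j, v⟫ * ⟪∑ k, q k • x k - x j, w⟫) := by
  have h := sum_mul_inner_mean_sub_eq_zero q x hq v
  simp only [inner_sub_left _ _ w, mul_sub, sum_sub_distrib, ← mul_assoc, ← sum_mul, h, zero_mul]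
  ring

end WeightedMean

namespace QuadraticTilt

variable {E ι : Type*} [NormedAddCommGroup E] (p : ι → ℝ) (f : ι → E) (c : ℝ)

noncomputable def weight (y : E) (j : ι) : ℝ := p j * exp (c / 2 * ‖y - f j‖ ^ 2)

theorem hasFDerivAt_weight [InnerProductSpace ℝ E] (y : E) (j : ι) :
    HasFDerivAt (weight p f c · j) ((c * weight p f c y j) • innerSL ℝ (y - f j)) y := by
  have h := ((((hasFDerivAt_id y).sub_const (f j)).norm_sq).const_mul (c / 2)).exp.const_mul (p j)
  refine h.congr_fderiv ?_
  ext u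
  simp only [id_eq, map_sub, ContinuousLinearMap.comp_id, smul_apply, sub_apply,
    coe_innerSL_apply, nsmul_eq_mul, Nat.cast_ofNat, smul_eq_mul, weight]
  ring

variable [Fintype ι]

noncomputable def partition (y : E) : ℝ := ∑ j, weight p f c y j

noncomputable def prob (y : E) (j : ι) : ℝ := weight p f c y j / partition p f c y

theorem partition_pos [Nonempty ι] (hp : ∀ j, 0 < p j) (y : E) : 0 < partition p f c y :=
  sum_pos (fun j _ => mul_pos (hp j) (exp_pos _)) univ_nonempty

theorem sum_prob {y : E} (hy : partition p f c y ≠ 0) : ∑ j, prob p f c y j = 1 := by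
  rw [← div_self hy, partition, sum_div]
  rfl

variable [InnerProductSpace ℝ E]

noncomputable def mean (y : E) : E := ∑ j, prob p f c y j • f j

theorem contDiff_partition : ContDiff ℝ ⊤ (partition p f c) :=
  ContDiff.sum fun _ _ => contDiff_const.mul
    ((contDiff_const.mul ((contDiff_id.sub contDiff_const).norm_sq ℝ)).exp)

theorem partition_mul_inner_sub_mean {y : E} (hy : partition p f c y ≠ 0) (u : E) :
    partition p f c y * ⟪y - mean p f c y, u⟫ = ∑ j, weight p f c y j * ⟪y - f j, u⟫ := by
  simp only [mean, prob, inner_sub_left, sum_inner, real_inner_smul_left, mul_sub,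
    sum_sub_distrib, ← sum_mul, mul_sum]
  refine congrArg₂ (· - ·) rfl (sum_congr rfl fun j _ => ?_)
  field_simp

theorem hasFDerivAt_partition {y : E} (hy : partition p f c y ≠ 0) :
    HasFDerivAt (partition p f c) ((c * partition p f c y) • innerSL ℝ (y - mean p f c y)) y := by
  refine (HasFDerivAt.fun_sum fun j _ => hasFDerivAt_weight p f c y j).congr_fderiv ?_
  ext u
  simp only [FunLike.coe_sum, FunLike.coe_smul, Finset.sum_apply, Pi.smul_apply,
    innerSL_apply_apply, smul_eq_mul]
  rw [mul_assoc, partition_mul_inner_sub_mean p f c hy, mul_sum]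
  simp only [mul_assoc]

theorem hasFDerivAt_log_partition {y : E} (hy : partition p f c y ≠ 0) :
    HasFDerivAt (fun y => log (partition p f c y)) (c • innerSL ℝ (y - mean p f c y)) y := by
  refine ((hasFDerivAt_partition p f c hy).log hy).congr_fderiv ?_
  rw [smul_smul, mul_comm c, ← mul_assoc, inv_mul_cancel₀ hy, one_mul]

theorem fderiv_log_partition_apply {y : E} (hy : partition p f c y ≠ 0) (w : E) :
    fderiv ℝ (fun y => log (partition p f c y)) y w = c * ⟪y - mean p f c y, w⟫ := by
  rw [(hasFDerivAt_log_partition p f c hy).fderiv, smul_apply, innerSL_apply_apply, smul_eq_mul]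

theorem hasFDerivAt_prob {y : E} (hy : partition p f c y ≠ 0) (j : ι) :
    HasFDerivAt (prob p f c · j) ((c * prob p f c y j) • innerSL ℝ (mean p f c y - f j)) y := by
  have h := (hasFDerivAt_weight p f c y j).mul
    ((hasDerivAt_inv hy).comp_hasFDerivAt y (hasFDerivAt_partition p f c hy))
  refine (h.congr_of_eventuallyEq (.of_forall fun z => div_eq_mul_inv _ _)).congr_fderiv ?_
  ext u
  simp only [add_apply, FunLike.coe_smul, Pi.smul_apply, innerSL_apply_apply, smul_eq_mul, prob,
    inner_sub_left, Function.comp_apply]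
  field_simp
  ring

theorem hasFDerivAt_mean {y : E} (hy : partition p f c y ≠ 0) :
    HasFDerivAt (mean p f c)
      (∑ j, ((c * prob p f c y j) • innerSL ℝ (mean p f c y - f j)).smulRight (f j)) y :=
  HasFDerivAt.fun_sum fun j _ => (hasFDerivAt_prob p f c hy j).smul_const (f j)

theorem fderiv_inner_sub_mean_apply {ψ : E} (hψ : partition p f c ψ ≠ 0) (v w : E) :
    fderiv ℝ (fun y => c * ⟪y - mean p f c y, w⟫) ψ v =
      c * ⟪v, w⟫ + c ^ 2 * ∑ j, prob p f c ψ j *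
        (⟪mean p f c ψ - f j, v⟫ * ⟪mean p f c ψ - f j, w⟫) := by
  have h : HasFDerivAt (fun y => c * ⟪y - mean p f c y, w⟫) _ ψ :=
    (((hasFDerivAt_id ψ).sub (hasFDerivAt_mean p f c hψ)).inner ℝ
      (hasFDerivAt_const w ψ)).const_mul c
  have hcov : ∑ j, prob p f c ψ j * (⟪mean p f c ψ - f j, v⟫ * ⟪f j, w⟫) =
      -∑ j, prob p f c ψ j * (⟪mean p f c ψ - f j, v⟫ * ⟪mean p f c ψ - f j, w⟫) :=
    sum_mul_inner_mean_sub_mul_inner _ f (sum_prob p f c hψ) v w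
  rw [h.fderiv]
  simp only [smul_apply, ContinuousLinearMap.comp_apply, ContinuousLinearMap.prod_apply,
    fderivInnerCLM_apply, zero_apply, inner_zero_right, zero_add, sub_apply,
    ContinuousLinearMap.id_apply, _root_.sum_apply, ContinuousLinearMap.smulRight_apply,
    coe_innerSL_apply, smul_eq_mul]
  rw [inner_sub_left, sum_inner]
  simp only [real_inner_smul_left, mul_assoc, ← mul_sum, hcov]
  ring

theorem iteratedFDeriv_two_log_partition [Nonempty ι] (hp : ∀ j, 0 < p j) (ψ v w : E) :
    iteratedFDeriv ℝ 2 (fun y => log (partition p f c y)) ψ ![v, w] =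
      c * ⟪v, w⟫ + c ^ 2 * ∑ j, prob p f c ψ j *
        (⟪mean p f c ψ - f j, v⟫ * ⟪mean p f c ψ - f j, w⟫) := by
  have hZ : ∀ y, partition p f c y ≠ 0 := fun y => (partition_pos p f c hp y).ne'
  have hL : ContDiff ℝ ⊤ fun y => log (partition p f c y) := (contDiff_partition p f c).log hZ
  rw [iteratedFDeriv_two_apply_eq_fderiv_fderiv_apply
      ((hL.fderiv_right (m := 1) le_top).differentiable one_ne_zero ψ),
    funext fun y => fderiv_log_partition_apply p f c (hZ y) w]
  exact fderiv_inner_sub_mean_apply p f c (hZ ψ) v w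

end QuadraticTilt

open QuadraticTilt in
theorem logJ_hessian_identity_general (n M : ℕ) (Y : EuclideanSpace ℝ (Fin n))
    (f : Fin M → EuclideanSpace ℝ (Fin n)) (pi : Fin M → ℝ)
    (hpi : ∀ j, 0 < pi j) (hpi1 : ∑ j, pi j = 1)
    (ν ω : ℝ)
    (J : EuclideanSpace ℝ (Fin n) → ℝ)
    (hJ : ∀ ψ, J ψ = ∑ j, pi j *
      Real.exp (-‖f j - Y‖^2 / (2*ω^2) + (1-ν) * ‖ψ - f j‖^2 / (2*ω^2)))
    (lam : EuclideanSpace ℝ (Fin n) → Fin M → ℝ)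
    (hlam : ∀ ψ j, lam ψ j =
      pi j * Real.exp (-‖f j - Y‖^2 / (2*ω^2) + (1-ν) * ‖ψ - f j‖^2 / (2*ω^2)) / J ψ)
    (flam : EuclideanSpace ℝ (Fin n) → EuclideanSpace ℝ (Fin n))
    (hflam : ∀ ψ, flam ψ = ∑ j, lam ψ j • f j) :
    ∀ ψ v w, iteratedFDeriv ℝ 2 (fun ψ => Real.log (J ψ)) ψ ![v, w]
      = ((1-ν)/ω^2) * ⟪v, w⟫
        + ((1-ν)/ω^2)^2 * ∑ j, lam ψ j * (⟪flam ψ - f j, v⟫ * ⟪flam ψ - f j, w⟫) := by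
  set p : Fin M → ℝ := fun j => pi j * exp (-‖f j - Y‖ ^ 2 / (2 * ω ^ 2))
  set c := (1 - ν) / ω ^ 2 with hc
  have hweight : ∀ ψ j, pi j * exp (-‖f j - Y‖^2 / (2*ω^2) + (1-ν) * ‖ψ - f j‖^2 / (2*ω^2)) =
      weight p f c ψ j := fun ψ j => by
    rw [weight, mul_assoc, ← exp_add, hc]
    ring_nf
  have hJp : J = partition p f c := funext fun ψ => by simp only [hJ, hweight]; rfl
  have hlamp : lam = prob p f c := by
    funext ψ j
    rw [hlam, hweight, hJp]
    rfl
  have hflamp : flam = mean p f c := by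
    funext ψ
    rw [hflam, hlamp]
    rfl
  subst hJp hlamp hflamp
  have : Nonempty (Fin M) :=
    univ_nonempty_iff.mp (nonempty_of_sum_ne_zero (hpi1 ▸ one_ne_zero))
  exact iteratedFDeriv_two_log_partition p f c (fun j => mul_pos (hpi j) (exp_pos _))

theorem logJ_hessian_identity (n M : ℕ) (Y : EuclideanSpace ℝ (Fin n))
    (f : Fin M → EuclideanSpace ℝ (Fin n)) (pi : Fin M → ℝ)
    (hpi : ∀ j, 0 < pi j) (hpi1 : ∑ j, pi j = 1)
    (ν ω : ℝ) (hν : ν ∈ Set.Ioo (0:ℝ) 1) (hω : 0 < ω)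
    (J : EuclideanSpace ℝ (Fin n) → ℝ)
    (hJ : ∀ ψ, J ψ = ∑ j, pi j *
      Real.exp (-‖f j - Y‖^2 / (2*ω^2) + (1-ν) * ‖ψ - f j‖^2 / (2*ω^2)))
    (lam : EuclideanSpace ℝ (Fin n) → Fin M → ℝ)
    (hlam : ∀ ψ j, lam ψ j =
      pi j * Real.exp (-‖f j - Y‖^2 / (2*ω^2) + (1-ν) * ‖ψ - f j‖^2 / (2*ω^2)) / J ψ)
    (flam : EuclideanSpace ℝ (Fin n) → EuclideanSpace ℝ (Fin n))
    (hflam : ∀ ψ, flam ψ = ∑ j, lam ψ j • f j) :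
    ∀ ψ v w, iteratedFDeriv ℝ 2 (fun ψ => Real.log (J ψ)) ψ ![v, w]
      = ((1-ν)/ω^2) * ⟪v, w⟫
        + ((1-ν)/ω^2)^2 * ∑ j, lam ψ j * (⟪flam ψ - f j, v⟫ * ⟪flam ψ - f j, w⟫) :=
  logJ_hessian_identity_general n M Y f pi hpi hpi1 ν ω J hJ lam hlam flam hflam
end

section
/- If a pair (λ⁰, h⁰) ∈ Λ^M × R^n satisfies both h⁰ = (1/ν)Y − ((1−ν)/ν) f_{λ⁰} and λ⁰_j = π_j exp(−ν‖f_j − h⁰‖²/(2ω²)) / ∑_i π_i exp(−ν‖f_i − h⁰‖²/(2ω²)) for all j, then Q(λ⁰) = T(h⁰). -/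
/-!
Write `F = f_{λ⁰}`. The first condition says `F - Y = ν (F - h⁰)` and `h⁰ - Y = (1 - ν)(h⁰ - F)`,
so both quadratic terms are multiples of `‖F - h⁰‖²`. The second says that `λ⁰` is the Gibbs
measure of the energies `ν‖f_j - h⁰‖² / (2ω²)` with respect to `π`, whose divergence from `π` is
minus the mean energy minus the log-partition function. The mean of `‖f_j - h⁰‖²` under `λ⁰`
splits into its variance around `F` plus `‖F - h⁰‖²`; the variance cancels the middle term of `Q`,
and both sides reduce to `-ν(1 - ν)‖F - h⁰‖² - 2ω² log ∑_j π_j exp(-ν‖f_j - h⁰‖²/(2ω²))`.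
-/

open Real Finset

theorem sum_mul_log_div_eq_of_gibbs {ι : Type*} [Fintype ι] {w p E : ι → ℝ}
    (hw : ∀ j, w j = p j * exp (E j) / ∑ i, p i * exp (E i)) (hw1 : ∑ j, w j = 1) :
    ∑ j, w j * log (w j / p j) = ∑ j, w j * E j - log (∑ i, p i * exp (E i)) := by
  set Z := ∑ i, p i * exp (E i)
  have hZ : Z ≠ 0 := by
    rintro hZ
    simp only [hZ, div_zero] at hw
    simp [hw] at hw1
  have hterm : ∀ j, w j * log (w j / p j) = w j * E j - w j * log Z := by
    intro j
    by_cases hp : p j = 0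
    · simp [hw j, hp]
    · rw [hw j, mul_div_assoc, mul_div_cancel_left₀ _ hp, log_div (exp_ne_zero _) hZ, log_exp]
      ring
  rw [sum_congr rfl fun j _ => hterm j, sum_sub_distrib, ← sum_mul, hw1, one_mul]

theorem sum_mul_norm_sub_sq_eq_add {ι E : Type*} [Fintype ι] [NormedAddCommGroup E]
    [InnerProductSpace ℝ E] {w : ι → ℝ} (hw : ∑ j, w j = 1) (x : ι → E) (h : E) :
    ∑ j, w j * ‖x j - h‖ ^ 2
      = ∑ j, w j * ‖x j - ∑ i, w i • x i‖ ^ 2 + ‖∑ i, w i • x i - h‖ ^ 2 := by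
  set m := ∑ i, w i • x i
  have hcentered : ∑ j, w j • (x j - m) = 0 := by
    simp only [smul_sub, sum_sub_distrib, ← sum_smul, hw, one_smul, m, sub_self]
  have hsplit : ∀ j, w j * ‖x j - h‖ ^ 2
      = w j * ‖x j - m‖ ^ 2 + 2 * inner ℝ (w j • (x j - m)) (m - h) + w j * ‖m - h‖ ^ 2 := by
    intro j
    rw [← sub_add_sub_cancel (x j) m h, norm_add_sq_real, real_inner_smul_left]
    ring
  rw [sum_congr rfl fun j _ => hsplit j, sum_add_distrib, sum_add_distrib, ← mul_sum,
    ← sum_inner, hcentered, inner_zero_left, ← sum_mul, hw]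
  ring

theorem saddle_point_Q_eq_T_general (n M : ℕ) (Y : EuclideanSpace ℝ (Fin n))
    (f : Fin M → EuclideanSpace ℝ (Fin n)) (pi : Fin M → ℝ)
    (ν ω : ℝ) (hν : ν ∈ Set.Ioo (0:ℝ) 1) (hω : 0 < ω)
    (Q : (Fin M → ℝ) → ℝ)
    (hQ : ∀ lam, Q lam = ‖(∑ j, lam j • f j) - Y‖^2
        + ν * ∑ j, lam j * ‖f j - ∑ i, lam i • f i‖^2
        + 2*ω^2 * ∑ j, lam j * Real.log (lam j / pi j))
    (T : EuclideanSpace ℝ (Fin n) → ℝ)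
    (hT : ∀ h, T h = -(ν/(1-ν)) * ‖h - Y‖^2
        - 2*ω^2 * Real.log (∑ j, pi j * Real.exp (-ν * ‖f j - h‖^2 / (2*ω^2))))
    (lam0 : Fin M → ℝ) (hlam0 : lam0 ∈ stdSimplex ℝ (Fin M))
    (h0 : EuclideanSpace ℝ (Fin n))
    (hA : h0 = (1/ν) • Y - ((1-ν)/ν) • ∑ j, lam0 j • f j)
    (hB : ∀ j, lam0 j = pi j * Real.exp (-ν * ‖f j - h0‖^2 / (2*ω^2))
        / ∑ i, pi i * Real.exp (-ν * ‖f i - h0‖^2 / (2*ω^2))) :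
    Q lam0 = T h0 := by
  obtain ⟨hν0, hν1⟩ := hν
  have hν1' : 1 - ν ≠ 0 := by linarith
  set F := ∑ j, lam0 j • f j
  have hFY : ‖F - Y‖ ^ 2 = ν ^ 2 * ‖F - h0‖ ^ 2 := by
    rw [show F - Y = ν • (F - h0) by rw [hA]; match_scalars <;> field_simp; ring,
      norm_smul, mul_pow, norm_eq_abs, sq_abs]
  have hhY : ‖h0 - Y‖ ^ 2 = (1 - ν) ^ 2 * ‖F - h0‖ ^ 2 := by
    rw [show h0 - Y = (1 - ν) • (h0 - F) by rw [hA]; match_scalars <;> field_simp; ring,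
      norm_smul, mul_pow, norm_eq_abs, sq_abs, norm_sub_rev]
  have hmean : ∑ j, lam0 j * (-ν * ‖f j - h0‖ ^ 2 / (2 * ω ^ 2))
      = -ν / (2 * ω ^ 2) * ∑ j, lam0 j * ‖f j - h0‖ ^ 2 := by
    rw [mul_sum]
    exact sum_congr rfl fun j _ => by ring
  rw [hQ, hT, hFY, hhY, sum_mul_log_div_eq_of_gibbs hB hlam0.2, hmean,
    sum_mul_norm_sub_sq_eq_add hlam0.2 f h0]
  field_simp
  ring

theorem saddle_point_Q_eq_T (n M : ℕ) (Y : EuclideanSpace ℝ (Fin n))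
    (f : Fin M → EuclideanSpace ℝ (Fin n)) (pi : Fin M → ℝ)
    (hpi : ∀ j, 0 < pi j) (hpi1 : ∑ j, pi j = 1)
    (ν ω : ℝ) (hν : ν ∈ Set.Ioo (0:ℝ) 1) (hω : 0 < ω)
    (Q : (Fin M → ℝ) → ℝ)
    (hQ : ∀ lam, Q lam = ‖(∑ j, lam j • f j) - Y‖^2
        + ν * ∑ j, lam j * ‖f j - ∑ i, lam i • f i‖^2
        + 2*ω^2 * ∑ j, lam j * Real.log (lam j / pi j))
    (T : EuclideanSpace ℝ (Fin n) → ℝ)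
    (hT : ∀ h, T h = -(ν/(1-ν)) * ‖h - Y‖^2
        - 2*ω^2 * Real.log (∑ j, pi j * Real.exp (-ν * ‖f j - h‖^2 / (2*ω^2))))
    (lam0 : Fin M → ℝ) (hlam0 : lam0 ∈ stdSimplex ℝ (Fin M))
    (h0 : EuclideanSpace ℝ (Fin n))
    (hA : h0 = (1/ν) • Y - ((1-ν)/ν) • ∑ j, lam0 j • f j)
    (hB : ∀ j, lam0 j = pi j * Real.exp (-ν * ‖f j - h0‖^2 / (2*ω^2))
        / ∑ i, pi i * Real.exp (-ν * ‖f i - h0‖^2 / (2*ω^2))) :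
    Q lam0 = T h0 :=
  saddle_point_Q_eq_T_general n M Y f pi ν ω hν hω Q hQ T hT lam0 hlam0 h0 hA hB
end

section
/- Recursion convergence: suppose a nonnegative sequence (δ_k) satisfies δ_0 ≤ 2A and δ_k ≤ (1 − 2/(k+1)) δ_{k−1} + 2(2/(k+1))² A for all k ≥ 1, for some A > 0. Then δ_k ≤ 8A/(k+3) for all k ≥ 0. -/
theorem recursion_convergence (δ : ℕ → ℝ) (A : ℝ) (hA : 0 < A)
    (hnonneg : ∀ k, 0 ≤ δ k)
    (h0 : δ 0 ≤ 2 * A)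
    (hrec : ∀ k : ℕ, 1 ≤ k →
      δ k ≤ (1 - 2/(k+1 : ℝ)) * δ (k-1) + 2 * (2/(k+1 : ℝ))^2 * A) :
    ∀ k : ℕ, δ k ≤ 8 * A / (k + 3 : ℝ) := by
  intro k
  induction k with
  | zero =>
    simp only [Nat.cast_zero, zero_add]
    rw [le_div_iff₀ (by norm_num)]
    nlinarith
  | succ n ih =>
    have h := hrec (n+1) (by omega)
    simp only [Nat.add_sub_cancel] at h
    push_cast at h ⊢
    have hn : (0:ℝ) ≤ n := Nat.cast_nonneg n
    have hd := hnonneg n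
    have h2 : (0:ℝ) < (n:ℝ)+1+1 := by linarith
    have h3 : (0:ℝ) < (n:ℝ)+3 := by linarith
    have h4 : (0:ℝ) < (n:ℝ)+1+3 := by linarith
    rw [le_div_iff₀ h4]
    have ih' : δ n * ((n:ℝ)+3) ≤ 8*A := (le_div_iff₀ h3).mp ih
    have h' : δ (n+1) * ((n:ℝ)+2)^2 ≤ (n:ℝ)*((n:ℝ)+2)*δ n + 8*A := by
      have := mul_le_mul_of_nonneg_right h (sq_nonneg ((n:ℝ)+2))
      have e2 : ((n:ℝ)+1+1) = (n:ℝ)+2 := by ring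
      rw [e2] at this
      calc δ (n+1) * ((n:ℝ)+2)^2 ≤ _ := this
        _ = (n:ℝ)*((n:ℝ)+2)*δ n + 8*A := by field_simp; ring
    have pos : (0:ℝ) < ((n:ℝ)+3)*((n:ℝ)+2)^2 := by positivity
    have hint1 := mul_le_mul_of_nonneg_right h'
      (show (0:ℝ) ≤ ((n:ℝ)+4)*((n:ℝ)+3) by positivity)
    have hint2 := mul_le_mul_of_nonneg_left ih'
      (show (0:ℝ) ≤ (n:ℝ)*((n:ℝ)+2)*((n:ℝ)+4) by positivity)
    have final : δ (n+1)*((n:ℝ)+1+3) * (((n:ℝ)+3)*((n:ℝ)+2)^2) ≤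
        8*A * (((n:ℝ)+3)*((n:ℝ)+2)^2) := by
      nlinarith [mul_nonneg hA.le hn]
    exact le_of_mul_le_mul_right final pos
end

section
/- Greedy descent step: let ψ* be the minimizer of log J, with associated weights λ_j ∝ π_j exp(−‖f_j − Y‖²/(2ω²) + (1−ν)‖ψ* − f_j‖²/(2ω²)) so that ψ* = ∑_j λ_j f_j. If ‖f_j‖ ≤ L for all j, and ψ' minimizes log J(ψ + α(f_j − ψ)) over j ∈ {1,...,M} for given ψ ∈ R^n with ‖ψ‖ ≤ L and α ∈ (0,1], then log J(ψ') ≤ (1−α) log J(ψ) + α log J(ψ*) + 2α² A_3, where A_3 = ((1−ν)/ω²)L² + ((1−ν)/ω²)²L⁴. -/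
/-!
With `c = (1-ν)/ω²`, `log J` is the log-sum-exp of the quadratics `a_k + c/2 ‖x - f_k‖²`. Its gradient
at `x` is `c (x - m(x))`, where `m(x)` is the mean of the `f_k` under the Gibbs weights at `x`.
By Jensen's inequality for `exp`, `log J` lies above its tangent planes. Hoeffding's lemma under the
Gibbs weights gives the descent inequality
`log J(ψ + d) ≤ log J(ψ) + c ⟪ψ - m(ψ), d⟫ + (c + c² L²)/2 ‖d‖²`.
The greedy minimum is at most the `λ`-average over the directions `d = α (f_j - ψ)`. That average
turns the linear term into `α c ⟪ψ - m(ψ), ψ* - ψ⟫`, which the tangent plane at `ψ` bounds by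
`α (log J(ψ*) - log J(ψ))`.
-/

open Real Finset MeasureTheory ProbabilityTheory

open scoped RealInnerProductSpace

section Hoeffding

variable {ι : Type*} [Fintype ι]

lemma integral_sum_smul_dirac [MeasurableSpace ι] [MeasurableSingletonClass ι]
    {w : ι → ℝ} (hw : ∀ k, 0 ≤ w k) (g : ι → ℝ) :
    ∫ k, g k ∂(∑ l, ENNReal.ofReal (w l) • Measure.dirac l) = ∑ l, w l * g l := by
  rw [integral_finsetSum_measure]
  · refine Finset.sum_congr rfl fun l _ => ?_
    rw [integral_smul_measure, integral_dirac, ENNReal.toReal_ofReal (hw l), smul_eq_mul]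
  · exact fun l _ => (integrable_dirac (by simp)).smul_measure ENNReal.ofReal_ne_top

/-- Hoeffding's lemma for a finitely supported distribution. -/
lemma sum_mul_exp_le_of_abs_le {w Z : ι → ℝ} (hw : ∀ k, 0 ≤ w k) (hw1 : ∑ k, w k = 1)
    {B : ℝ} (hZ : ∀ k, |Z k| ≤ B) (t : ℝ) :
    ∑ k, w k * exp (t * Z k) ≤ exp (t * ∑ k, w k * Z k + B ^ 2 * t ^ 2 / 2) := by
  let _ : MeasurableSpace ι := ⊤
  set μ : Measure ι := ∑ l, ENNReal.ofReal (w l) • Measure.dirac l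
  have : IsProbabilityMeasure μ :=
    ⟨by simp [μ, ← ENNReal.ofReal_sum_of_nonneg fun l _ => hw l, hw1]⟩
  have hoeffding := (hasSubgaussianMGF_of_mem_Icc (μ := μ) (a := -B) (b := B)
    (measurable_of_countable Z).aemeasurable (ae_of_all _ fun k => abs_le.mp (hZ k))).mgf_le t
  have hvar : (((‖B - -B‖₊ / 2) ^ 2 : NNReal) : ℝ) = B ^ 2 := by
    simp [sub_neg_eq_add, ← two_mul]
  simp only [mgf] at hoeffding
  rw [integral_sum_smul_dirac hw, integral_sum_smul_dirac hw, hvar] at hoeffding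
  have hcenter : ∑ k, w k * exp (t * Z k)
      = exp (t * ∑ k, w k * Z k) * ∑ k, w k * exp (t * (Z k - ∑ l, w l * Z l)) := by
    rw [Finset.mul_sum]
    refine Finset.sum_congr rfl fun k _ => ?_
    rw [mul_left_comm, ← exp_add]
    ring_nf
  rw [hcenter, exp_add]
  gcongr

end Hoeffding

section Gibbs

variable {ι : Type*} [Fintype ι] {p : ι → ℝ}

noncomputable def partitionFn (p F : ι → ℝ) : ℝ := ∑ k, p k * exp (F k)

noncomputable def gibbsWeight (p F : ι → ℝ) (k : ι) : ℝ := p k * exp (F k) / partitionFn p F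

lemma partitionFn_pos [Nonempty ι] (hp : ∀ k, 0 < p k) (F : ι → ℝ) : 0 < partitionFn p F :=
  Finset.sum_pos (fun k _ => mul_pos (hp k) (exp_pos _)) Finset.univ_nonempty

lemma gibbsWeight_nonneg [Nonempty ι] (hp : ∀ k, 0 < p k) (F : ι → ℝ) (k : ι) :
    0 ≤ gibbsWeight p F k :=
  div_nonneg (mul_pos (hp k) (exp_pos _)).le (partitionFn_pos hp F).le

lemma sum_gibbsWeight [Nonempty ι] (hp : ∀ k, 0 < p k) (F : ι → ℝ) :
    ∑ k, gibbsWeight p F k = 1 := by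
  simp only [gibbsWeight]
  rw [← Finset.sum_div, ← partitionFn, div_self (partitionFn_pos hp F).ne']

lemma partitionFn_eq_mul_sum_gibbsWeight [Nonempty ι] (hp : ∀ k, 0 < p k) (F G : ι → ℝ) :
    partitionFn p G = partitionFn p F * ∑ k, gibbsWeight p F k * exp (G k - F k) := by
  rw [Finset.mul_sum]
  refine Finset.sum_congr rfl fun k _ => ?_
  rw [gibbsWeight, ← mul_assoc, mul_div_cancel₀ _ (partitionFn_pos hp F).ne', mul_assoc, ← exp_add,
    add_sub_cancel]

/-- `log ∘ partitionFn p` lies above its tangent planes. -/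
lemma sum_gibbsWeight_mul_sub_le [Nonempty ι] (hp : ∀ k, 0 < p k) (F G : ι → ℝ) :
    ∑ k, gibbsWeight p F k * (G k - F k) ≤ log (partitionFn p G) - log (partitionFn p F) := by
  have jensen : exp (∑ k, gibbsWeight p F k * (G k - F k))
      ≤ ∑ k, gibbsWeight p F k * exp (G k - F k) := by
    simpa only [smul_eq_mul] using convexOn_exp.map_sum_le (t := Finset.univ)
      (fun k _ => gibbsWeight_nonneg hp F k) (sum_gibbsWeight hp F) fun k _ => Set.mem_univ _
  rw [partitionFn_eq_mul_sum_gibbsWeight hp F G,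
    log_mul (partitionFn_pos hp F).ne' (lt_of_lt_of_le (exp_pos _) jensen).ne', add_sub_cancel_left]
  exact (le_log_iff_exp_le (lt_of_lt_of_le (exp_pos _) jensen)).mpr jensen

lemma log_partitionFn_sub_le [Nonempty ι] (hp : ∀ k, 0 < p k) {F G Z : ι → ℝ} {s t B : ℝ}
    (hGF : ∀ k, G k - F k = s + t * Z k) (hZ : ∀ k, |Z k| ≤ B) :
    log (partitionFn p G) - log (partitionFn p F)
      ≤ s + t * ∑ k, gibbsWeight p F k * Z k + B ^ 2 * t ^ 2 / 2 := by
  have hoeffding := sum_mul_exp_le_of_abs_le (gibbsWeight_nonneg hp F) (sum_gibbsWeight hp F) hZ t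
  have hpos : 0 < ∑ k, gibbsWeight p F k * exp (G k - F k) := by
    have := partitionFn_pos hp G
    rw [partitionFn_eq_mul_sum_gibbsWeight hp F G] at this
    exact pos_of_mul_pos_right this (partitionFn_pos hp F).le
  rw [partitionFn_eq_mul_sum_gibbsWeight hp F G,
    log_mul (partitionFn_pos hp F).ne' hpos.ne', add_sub_cancel_left]
  simp only [hGF, exp_add, mul_left_comm _ (exp s), ← Finset.mul_sum] at hpos ⊢
  rw [log_mul (exp_pos s).ne' (pos_of_mul_pos_right hpos (exp_pos s).le).ne', log_exp, add_assoc]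
  gcongr
  exact (log_le_iff_le_exp (pos_of_mul_pos_right hpos (exp_pos s).le)).mpr hoeffding

end Gibbs

lemma le_inner_sum_smul {ι E : Type*} [Fintype ι] [NormedAddCommGroup E] [InnerProductSpace ℝ E]
    {w : ι → ℝ} (hw : ∀ k, 0 ≤ w k) (hw1 : ∑ k, w k = 1) {r : ℝ} {u : E} {g : ι → E}
    (h : ∀ k, r ≤ ⟪u, g k⟫) : r ≤ ⟪u, ∑ k, w k • g k⟫ := by
  simp only [inner_sum, real_inner_smul_right]
  calc r = ∑ k, w k * r := by rw [← Finset.sum_mul, hw1, one_mul]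
    _ ≤ ∑ k, w k * ⟪u, g k⟫ := by gcongr with k; exacts [hw k, h k]

section Quadratic

variable {ι E : Type*} [NormedAddCommGroup E] [InnerProductSpace ℝ E]
  (a : ι → ℝ) (c : ℝ) (f : ι → E)

noncomputable def quadEnergy (x : E) (k : ι) : ℝ := a k + c / 2 * ‖x - f k‖ ^ 2

-- in the shape `s + t * Z k` required by `log_partitionFn_sub_le`
lemma quadEnergy_add_sub (x d : E) (k : ι) :
    quadEnergy a c f (x + d) k - quadEnergy a c f x k
      = (c * ⟪x, d⟫ + c / 2 * ‖d‖ ^ 2) + c * -⟪f k, d⟫ := by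
  simp only [quadEnergy, add_sub_right_comm x d, norm_add_sq_real, inner_sub_left]
  ring

variable [Fintype ι]

noncomputable def gibbsMean (p : ι → ℝ) (x : E) : E :=
  ∑ k, gibbsWeight p (quadEnergy a c f x) k • f k

variable {p : ι → ℝ}

lemma sum_gibbsWeight_mul_inner (x d : E) :
    ∑ k, gibbsWeight p (quadEnergy a c f x) k * ⟪f k, d⟫ = ⟪gibbsMean a c f p x, d⟫ := by
  simp only [gibbsMean, sum_inner, real_inner_smul_left]

lemma log_partitionFn_quadEnergy_add_le [Nonempty ι] (hp : ∀ k, 0 < p k) {R : ℝ}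
    (hf : ∀ k, ‖f k‖ ≤ R) (x d : E) :
    log (partitionFn p (quadEnergy a c f (x + d)))
      ≤ log (partitionFn p (quadEnergy a c f x)) + c * ⟪x - gibbsMean a c f p x, d⟫
        + (c + c ^ 2 * R ^ 2) / 2 * ‖d‖ ^ 2 := by
  have hZ (k : ι) : |-⟪f k, d⟫| ≤ R * ‖d‖ := by
    rw [abs_neg]
    exact (abs_real_inner_le_norm _ _).trans (by gcongr; exact hf k)
  have := log_partitionFn_sub_le hp (quadEnergy_add_sub a c f x d) hZ
  simp only [mul_neg, Finset.sum_neg_distrib, sum_gibbsWeight_mul_inner] at this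
  rw [inner_sub_left]
  linarith

lemma inner_le_log_partitionFn_quadEnergy_sub [Nonempty ι] (hp : ∀ k, 0 < p k) (hc : 0 ≤ c)
    (x y : E) :
    c * ⟪x - gibbsMean a c f p x, y - x⟫
      ≤ log (partitionFn p (quadEnergy a c f y)) - log (partitionFn p (quadEnergy a c f x)) := by
  have tangent := sum_gibbsWeight_mul_sub_le hp (quadEnergy a c f x) (quadEnergy a c f y)
  have hy : y = x + (y - x) := (add_sub_cancel x y).symm
  conv at tangent => enter [1, 2, k, 2]; rw [hy, quadEnergy_add_sub]
  simp only [mul_add, Finset.sum_add_distrib, ← Finset.sum_mul, sum_gibbsWeight hp,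
    mul_left_comm _ c, ← Finset.mul_sum, mul_neg, Finset.sum_neg_distrib,
    sum_gibbsWeight_mul_inner] at tangent
  rw [inner_sub_left]
  nlinarith [sq_nonneg ‖y - x‖]

lemma log_partitionFn_greedy_le [Nonempty ι] (hp : ∀ k, 0 < p k) (hc : 0 ≤ c) {R : ℝ}
    (hf : ∀ k, ‖f k‖ ≤ R) {x : E} (hx : ‖x‖ ≤ R) {w : ι → ℝ} (hw : ∀ k, 0 ≤ w k)
    (hw1 : ∑ k, w k = 1) {α r : ℝ} (hα : 0 ≤ α)
    (hr : ∀ j, r ≤ log (partitionFn p (quadEnergy a c f (x + α • (f j - x))))) :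
    r ≤ (1 - α) * log (partitionFn p (quadEnergy a c f x))
      + α * log (partitionFn p (quadEnergy a c f (∑ k, w k • f k)))
      + 2 * α ^ 2 * (c * R ^ 2 + c ^ 2 * R ^ 4) := by
  have hstep (j : ι) : r - log (partitionFn p (quadEnergy a c f x))
      - 2 * α ^ 2 * (c * R ^ 2 + c ^ 2 * R ^ 4) ≤ ⟪(α * c) • (x - gibbsMean a c f p x), f j - x⟫ := by
    have hd : ‖α • (f j - x)‖ ≤ α * (2 * R) := by
      rw [norm_smul, Real.norm_of_nonneg hα]
      gcongr
      linarith [norm_sub_le (f j) x, hf j]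
    have hdescent := log_partitionFn_quadEnergy_add_le a c f hp hf x (α • (f j - x))
    have hcurv : (c + c ^ 2 * R ^ 2) / 2 * ‖α • (f j - x)‖ ^ 2
        ≤ (c + c ^ 2 * R ^ 2) / 2 * (α * (2 * R)) ^ 2 := by gcongr
    rw [real_inner_smul_right] at hdescent
    rw [real_inner_smul_left]
    linarith [hr j]
  have hmean := le_inner_sum_smul hw hw1 hstep
  have hbary : ∑ k, w k • (f k - x) = ∑ k, w k • f k - x := by
    simp only [smul_sub, Finset.sum_sub_distrib, ← Finset.sum_smul, hw1, one_smul]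
  rw [hbary, real_inner_smul_left] at hmean
  have htangent := inner_le_log_partitionFn_quadEnergy_sub a c f hp hc x (∑ k, w k • f k)
  nlinarith [mul_le_mul_of_nonneg_left htangent hα]

end Quadratic

theorem greedy_descent_step_general (n M : ℕ) (hM : 0 < M) (Y : EuclideanSpace ℝ (Fin n))
    (f : Fin M → EuclideanSpace ℝ (Fin n)) (pi : Fin M → ℝ) (L : ℝ)
    (hL : ∀ j, ‖f j‖ ≤ L)
    (hpi : ∀ j, 0 < pi j)
    (ν ω : ℝ) (hν : ν ∈ Set.Ioo (0:ℝ) 1)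
    (J : EuclideanSpace ℝ (Fin n) → ℝ)
    (hJ : ∀ ψ, J ψ = ∑ j, pi j *
      Real.exp (-‖f j - Y‖^2 / (2*ω^2) + (1-ν) * ‖ψ - f j‖^2 / (2*ω^2)))
    (ψstar : EuclideanSpace ℝ (Fin n))
    (lam : Fin M → ℝ)
    (hlam : ∀ j, lam j =
      pi j * Real.exp (-‖f j - Y‖^2 / (2*ω^2) + (1-ν) * ‖ψstar - f j‖^2 / (2*ω^2))
        / J ψstar)
    (hfix : ψstar = ∑ j, lam j • f j)
    (ψ : EuclideanSpace ℝ (Fin n)) (hψ : ‖ψ‖ ≤ L)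
    (α : ℝ) (hα : α ∈ Set.Ioc (0:ℝ) 1)
    (ψ' : EuclideanSpace ℝ (Fin n))
    (hopt : ∀ j, Real.log (J ψ') ≤ Real.log (J (ψ + α • (f j - ψ)))) :
    Real.log (J ψ') ≤ (1-α) * Real.log (J ψ) + α * Real.log (J ψstar)
      + 2 * α^2 * (((1-ν)/ω^2) * L^2 + ((1-ν)/ω^2)^2 * L^4) := by
  have : Nonempty (Fin M) := ⟨⟨0, hM⟩⟩
  set c := (1 - ν) / ω ^ 2
  have hc : 0 ≤ c := div_nonneg (by linarith [hν.2]) (sq_nonneg ω)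
  set a : Fin M → ℝ := fun k => -‖f k - Y‖ ^ 2 / (2 * ω ^ 2)
  have hJ' (x) : J x = partitionFn pi (quadEnergy a c f x) := by
    rw [hJ, partitionFn]
    refine Finset.sum_congr rfl fun j _ => ?_
    simp only [quadEnergy, a, c]
    ring_nf
  have hlam' (j) : lam j = gibbsWeight pi (quadEnergy a c f ψstar) j := by
    rw [hlam, gibbsWeight, ← hJ']
    simp only [quadEnergy, a, c]
    ring_nf
  have hlam0 (j) : 0 ≤ lam j := hlam' j ▸ gibbsWeight_nonneg hpi _ j
  have hlam1 : ∑ j, lam j = 1 := by simp only [hlam', sum_gibbsWeight hpi]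
  simp only [hJ'] at hopt ⊢
  rw [hfix]
  exact log_partitionFn_greedy_le a c f hpi hc hL hψ hlam0 hlam1 hα.1.le hopt

theorem greedy_descent_step (n M : ℕ) (hM : 0 < M) (Y : EuclideanSpace ℝ (Fin n))
    (f : Fin M → EuclideanSpace ℝ (Fin n)) (pi : Fin M → ℝ) (L : ℝ)
    (hL : ∀ j, ‖f j‖ ≤ L)
    (hpi : ∀ j, 0 < pi j) (hpi1 : ∑ j, pi j = 1)
    (ν ω : ℝ) (hν : ν ∈ Set.Ioo (0:ℝ) 1) (hω : 0 < ω)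
    (J : EuclideanSpace ℝ (Fin n) → ℝ)
    (hJ : ∀ ψ, J ψ = ∑ j, pi j *
      Real.exp (-‖f j - Y‖^2 / (2*ω^2) + (1-ν) * ‖ψ - f j‖^2 / (2*ω^2)))
    (ψstar : EuclideanSpace ℝ (Fin n))
    (hmin : ∀ ψ, Real.log (J ψstar) ≤ Real.log (J ψ))
    (lam : Fin M → ℝ)
    (hlam : ∀ j, lam j =
      pi j * Real.exp (-‖f j - Y‖^2 / (2*ω^2) + (1-ν) * ‖ψstar - f j‖^2 / (2*ω^2))
        / J ψstar)
    (hfix : ψstar = ∑ j, lam j • f j)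
    (ψ : EuclideanSpace ℝ (Fin n)) (hψ : ‖ψ‖ ≤ L)
    (α : ℝ) (hα : α ∈ Set.Ioc (0:ℝ) 1)
    (ψ' : EuclideanSpace ℝ (Fin n))
    (hmem : ∃ j0, ψ' = ψ + α • (f j0 - ψ))
    (hopt : ∀ j, Real.log (J ψ') ≤ Real.log (J (ψ + α • (f j - ψ)))) :
    Real.log (J ψ') ≤ (1-α) * Real.log (J ψ) + α * Real.log (J ψstar)
      + 2 * α^2 * (((1-ν)/ω^2) * L^2 + ((1-ν)/ω^2)^2 * L^4) :=
  greedy_descent_step_general n M hM Y f pi L hL hpi ν ω hν J hJ ψstar lam hlam hfix ψ hψ α hα ψ'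
    hopt
end

section
/- The gradient identity for log J: ∇ log J(ψ) = ((1−ν)/ω²)(ψ − f_λ), where λ_j ∝ π_j exp(−‖f_j − Y‖²/(2ω²) + (1−ν)‖ψ − f_j‖²/(2ω²)) and f_λ = ∑_j λ_j f_j. In particular, ψ is a critical point of log J if and only if ψ = f_λ, i.e., the BMAX estimator is a fixed point of the exponential reweighting map. -/
/-!
With `κ = (1 - ν) / ω²`, each summand of `J` is a weight `a * exp (b + κ ‖ψ - x‖² / 2)`, whose
derivative is `κ` times the weight times `⟪ψ - x, ·⟫`. Dividing the sum of these by `J` turns the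
weights into the `λ_j`, and linearity of `innerSL` collapses the result to `κ ⟪ψ - f_λ, ·⟫`; as
`κ ≠ 0` and `innerSL` is injective, this vanishes exactly when `ψ = f_λ`.
-/

open Real Finset RealInnerProductSpace

section

variable {ι E : Type*} [Fintype ι] [NormedAddCommGroup E] [InnerProductSpace ℝ E]

theorem hasFDerivAt_mul_exp_add_mul_norm_sub_sq (a b κ : ℝ) (x ψ : E) :
    HasFDerivAt (fun ψ : E => a * exp (b + κ * ‖ψ - x‖ ^ 2 / 2))
      ((κ * (a * exp (b + κ * ‖ψ - x‖ ^ 2 / 2))) • innerSL ℝ (ψ - x)) ψ := by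
  have hnorm : HasFDerivAt (fun ψ : E => ‖ψ - x‖ ^ 2) (2 • innerSL ℝ (ψ - x)) ψ := by
    simpa using ((hasFDerivAt_id ψ).sub_const x).norm_sq
  have hexponent := (hnorm.const_mul (κ / 2)).const_add b
  refine ((hexponent.congr_of_eventuallyEq
    (.of_forall fun _ => by ring)).exp.const_mul a).congr_fderiv ?_
  ext v
  simp only [_root_.smul_apply, smul_eq_mul, innerSL_apply_apply]
  ring

theorem sum_smul_sub_eq_smul_sub_sum_div_smul (w : ι → ℝ) (x : ι → E) (ψ : E)
    (hw : ∑ i, w i ≠ 0) :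
    ∑ j, w j • (ψ - x j) = (∑ i, w i) • (ψ - ∑ j, (w j / ∑ i, w i) • x j) := by
  simp only [smul_sub, sum_sub_distrib, ← sum_smul, smul_sum, smul_smul,
    mul_div_cancel₀ _ hw]

theorem hasFDerivAt_log_sum_of_smul_innerSL {w : ι → E → ℝ} {x : ι → E} {κ : ℝ} {ψ : E}
    (hw : ∀ j, HasFDerivAt (w j) ((κ * w j ψ) • innerSL ℝ (ψ - x j)) ψ)
    (hS : ∑ i, w i ψ ≠ 0) :
    HasFDerivAt (fun ψ => log (∑ j, w j ψ))
      (κ • innerSL ℝ (ψ - ∑ j, (w j ψ / ∑ i, w i ψ) • x j)) ψ := by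
  refine ((HasFDerivAt.fun_sum fun j _ => hw j).log hS).congr_fderiv ?_
  have hsum : ∑ j, (κ * w j ψ) • innerSL ℝ (ψ - x j)
      = (κ * ∑ i, w i ψ) • innerSL ℝ (ψ - ∑ j, (w j ψ / ∑ i, w i ψ) • x j) := by
    simp only [mul_smul, ← smul_sum, ← map_smul, ← map_sum,
      sum_smul_sub_eq_smul_sub_sum_div_smul _ _ _ hS]
  rw [hsum, smul_smul, mul_left_comm, inv_mul_cancel₀ hS, mul_one]

theorem smul_innerSL_eq_zero_iff {κ : ℝ} (hκ : κ ≠ 0) {v : E} :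
    κ • innerSL ℝ v = 0 ↔ v = 0 := by
  rw [← norm_eq_zero, norm_smul, innerSL_apply_norm, mul_eq_zero, norm_eq_zero, norm_eq_zero,
    or_iff_right hκ]

end

theorem logJ_gradient_identity (n M : ℕ) (Y : EuclideanSpace ℝ (Fin n))
    (f : Fin M → EuclideanSpace ℝ (Fin n)) (pi : Fin M → ℝ)
    (hpi : ∀ j, 0 < pi j) (hpi1 : ∑ j, pi j = 1)
    (ν ω : ℝ) (hν : ν ∈ Set.Ioo (0:ℝ) 1) (hω : 0 < ω)
    (J : EuclideanSpace ℝ (Fin n) → ℝ)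
    (hJ : ∀ ψ, J ψ = ∑ j, pi j *
      Real.exp (-‖f j - Y‖^2 / (2*ω^2) + (1-ν) * ‖ψ - f j‖^2 / (2*ω^2)))
    (lam : EuclideanSpace ℝ (Fin n) → Fin M → ℝ)
    (hlam : ∀ ψ j, lam ψ j =
      pi j * Real.exp (-‖f j - Y‖^2 / (2*ω^2) + (1-ν) * ‖ψ - f j‖^2 / (2*ω^2)) / J ψ)
    (flam : EuclideanSpace ℝ (Fin n) → EuclideanSpace ℝ (Fin n))
    (hflam : ∀ ψ, flam ψ = ∑ j, lam ψ j • f j) :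
    (∀ ψ v, fderiv ℝ (fun ψ => Real.log (J ψ)) ψ v
        = ((1-ν)/ω^2) * ⟪ψ - flam ψ, v⟫)
    ∧ (∀ ψ, fderiv ℝ (fun ψ => Real.log (J ψ)) ψ = 0 ↔ ψ = flam ψ) := by
  set κ := (1 - ν) / ω ^ 2
  have hκ : κ ≠ 0 := (div_pos (sub_pos.2 hν.2) (by positivity)).ne'
  have hexponent : ∀ ψ j, -‖f j - Y‖ ^ 2 / (2 * ω ^ 2) + (1 - ν) * ‖ψ - f j‖ ^ 2 / (2 * ω ^ 2)
      = -‖f j - Y‖ ^ 2 / (2 * ω ^ 2) + κ * ‖ψ - f j‖ ^ 2 / 2 := fun _ _ => by ring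
  simp only [hexponent] at hJ hlam
  have hne : (univ : Finset (Fin M)).Nonempty := nonempty_of_sum_ne_zero (hpi1 ▸ one_ne_zero)
  have hJpos : ∀ ψ, 0 < J ψ := fun ψ => hJ ψ ▸
    sum_pos (fun j _ => mul_pos (hpi j) (exp_pos _)) hne
  have hlog : ∀ ψ, HasFDerivAt (fun ψ => log (J ψ)) (κ • innerSL ℝ (ψ - flam ψ)) ψ := by
    intro ψ
    simp only [hJ, hflam, hlam]
    exact hasFDerivAt_log_sum_of_smul_innerSL
      (fun j => hasFDerivAt_mul_exp_add_mul_norm_sub_sq _ _ κ (f j) ψ) (hJ ψ ▸ (hJpos ψ).ne')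
  refine ⟨fun ψ v => by
    simp only [(hlog ψ).fderiv, _root_.smul_apply, innerSL_apply_apply, smul_eq_mul],
    fun ψ => ?_⟩
  rw [(hlog ψ).fderiv, smul_innerSL_eq_zero_iff hκ, sub_eq_zero]
end

section
/- Uniqueness of the BMAX estimator: the function ψ ↦ J(ψ) = ∑_j π_j exp(−‖f_j − Y‖²/(2ω²) + (1−ν)‖ψ − f_j‖²/(2ω²)) is strictly convex on R^n and attains a unique global minimizer. -/
open Real Finset

/-! Each summand of `J` is a positive multiple of `exp` of a strictly convex quadratic, hence
strictly convex, and so is `J`. A single summand already grows like `exp (c‖ψ‖²)` with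
`c = (1 - ν) / (2ω²) > 0`, so `J` is coercive; a coercive strictly convex function on a
finite-dimensional space is continuous, attains its minimum, and attains it only once. -/

open Filter Set in
theorem StrictConvexOn.existsUnique_forall_le {E : Type*} [NormedAddCommGroup E]
    [NormedSpace ℝ E] [FiniteDimensional ℝ E] {f : E → ℝ} (hf : StrictConvexOn ℝ univ f)
    (hf_coercive : Tendsto f (cocompact E) atTop) : ∃! x, ∀ y, f x ≤ f y := by
  have hcont : Continuous f :=
    continuousOn_univ.1 (hf.convexOn.continuousOn isOpen_univ)
  obtain ⟨x, hx⟩ := hcont.exists_forall_le hf_coercive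
  exact ⟨x, hx, fun y hy =>
    hf.eq_of_isMinOn (isMinOn_univ_iff.2 hy) (isMinOn_univ_iff.2 hx) trivial trivial⟩

section StrictConvexOn

variable {E ι : Type*} [AddCommMonoid E] [Module ℝ E] {s : Set E}

theorem StrictConvexOn.const_mul {f : E → ℝ} {c : ℝ} (hc : 0 < c)
    (hf : StrictConvexOn ℝ s f) : StrictConvexOn ℝ s fun x => c * f x :=
  ⟨hf.1, fun _ hx _ hy hxy _ _ ha hb hab => by
    simpa only [smul_eq_mul, mul_add, mul_left_comm c] using
      mul_lt_mul_of_pos_left (hf.2 hx hy hxy ha hb hab) hc⟩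

theorem StrictConvexOn.exp {f : E → ℝ} (hf : StrictConvexOn ℝ s f) :
    StrictConvexOn ℝ s fun x => Real.exp (f x) :=
  ⟨hf.1, fun _ hx _ hy hxy _ _ ha hb hab =>
    (exp_lt_exp.2 (hf.2 hx hy hxy ha hb hab)).trans_le
      (convexOn_exp.2 trivial trivial ha.le hb.le hab)⟩

theorem StrictConvexOn.finset_sum {t : Finset ι} (ht : t.Nonempty) {f : ι → E → ℝ}
    (hf : ∀ i ∈ t, StrictConvexOn ℝ s (f i)) :
    StrictConvexOn ℝ s fun x => ∑ i ∈ t, f i x := by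
  induction ht using Finset.Nonempty.cons_induction with
  | singleton i => simpa using hf i (mem_singleton_self i)
  | cons i t hi ht ih =>
    simp only [sum_cons]
    exact (hf i (mem_cons_self i t)).add (ih fun j hj => hf j (mem_cons_of_mem hj))

end StrictConvexOn

section InnerProductSpace

variable {E : Type*} [NormedAddCommGroup E] [InnerProductSpace ℝ E]

theorem strictConvexOn_norm_sub_sq (v : E) :
    StrictConvexOn ℝ Set.univ fun x : E => ‖x - v‖ ^ 2 := by
  have hsq : StrictConvexOn ℝ Set.univ fun x : E => ‖x‖ ^ 2 := by
    refine StrongConvexOn.strictConvexOn (m := 2) ?_ two_pos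
    rw [strongConvexOn_iff_convex]
    simpa using convexOn_const (0 : ℝ) convex_univ
  simpa [Function.comp_def, sub_eq_add_neg] using hsq.translate_left (-v)

theorem strictConvexOn_mul_exp_add_mul_norm_sub_sq {c a : ℝ} (hc : 0 < c) (ha : 0 < a)
    (b : ℝ) (v : E) :
    StrictConvexOn ℝ Set.univ fun x => c * Real.exp (b + a * ‖x - v‖ ^ 2) := by
  have := ((strictConvexOn_norm_sub_sq v).const_mul ha).add_const b
  refine (StrictConvexOn.exp ?_).const_mul hc
  simpa only [Pi.add_def, add_comm] using this

end InnerProductSpace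

open Filter in
theorem tendsto_mul_exp_add_mul_norm_sub_sq_cocompact {E : Type*} [NormedAddCommGroup E]
    [ProperSpace E] {c a : ℝ} (hc : 0 < c) (ha : 0 < a) (b : ℝ) (v : E) :
    Tendsto (fun x => c * Real.exp (b + a * ‖x - v‖ ^ 2)) (cocompact E) atTop := by
  have hdist : Tendsto (fun x => ‖x - v‖) (cocompact E) atTop := by
    rw [← Metric.cobounded_eq_cocompact]
    exact tendsto_norm_cobounded_atTop.comp (tendsto_sub_const_cobounded v)
  refine (tendsto_exp_atTop.comp ?_).const_mul_atTop hc
  exact tendsto_atTop_add_const_left _ b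
    (((tendsto_pow_atTop two_ne_zero).comp hdist).const_mul_atTop ha)

theorem J_strictly_convex_unique_min_general (n M : ℕ) (hM : 0 < M)
    (Y : EuclideanSpace ℝ (Fin n))
    (f : Fin M → EuclideanSpace ℝ (Fin n)) (pi : Fin M → ℝ)
    (hpi : ∀ j, 0 < pi j)
    (ν ω : ℝ) (hν : ν ∈ Set.Ioo (0:ℝ) 1) (hω : 0 < ω)
    (J : EuclideanSpace ℝ (Fin n) → ℝ)
    (hJ : ∀ ψ, J ψ = ∑ j, pi j *
      Real.exp (-‖f j - Y‖^2 / (2*ω^2) + (1-ν) * ‖ψ - f j‖^2 / (2*ω^2))) :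
    StrictConvexOn ℝ Set.univ J ∧ ∃! ψstar, ∀ ψ, J ψstar ≤ J ψ := by
  set a := (1 - ν) / (2 * ω ^ 2)
  have ha : 0 < a := div_pos (sub_pos.2 hν.2) (by positivity)
  set b := fun j => -‖f j - Y‖ ^ 2 / (2 * ω ^ 2)
  have hJ_eq : J = fun ψ => ∑ j, pi j * Real.exp (b j + a * ‖ψ - f j‖ ^ 2) :=
    funext fun ψ => by simp only [hJ, mul_div_right_comm, a, b]
  let j₀ : Fin M := ⟨0, hM⟩
  have hconvex : StrictConvexOn ℝ Set.univ J :=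
    hJ_eq ▸ StrictConvexOn.finset_sum ⟨j₀, mem_univ _⟩ fun j _ =>
      strictConvexOn_mul_exp_add_mul_norm_sub_sq (hpi j) ha (b j) (f j)
  refine ⟨hconvex, hconvex.existsUnique_forall_le ?_⟩
  refine Filter.tendsto_atTop_mono (fun ψ => ?_)
    (tendsto_mul_exp_add_mul_norm_sub_sq_cocompact (hpi j₀) ha (b j₀) (f j₀))
  rw [hJ_eq]
  exact single_le_sum (f := fun j => pi j * Real.exp (b j + a * ‖ψ - f j‖ ^ 2))
    (fun j _ => (mul_pos (hpi j) (exp_pos _)).le) (mem_univ j₀)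

theorem J_strictly_convex_unique_min (n M : ℕ) (hM : 0 < M)
    (Y : EuclideanSpace ℝ (Fin n))
    (f : Fin M → EuclideanSpace ℝ (Fin n)) (pi : Fin M → ℝ)
    (hpi : ∀ j, 0 < pi j) (hpi1 : ∑ j, pi j = 1)
    (ν ω : ℝ) (hν : ν ∈ Set.Ioo (0:ℝ) 1) (hω : 0 < ω)
    (J : EuclideanSpace ℝ (Fin n) → ℝ)
    (hJ : ∀ ψ, J ψ = ∑ j, pi j *
      Real.exp (-‖f j - Y‖^2 / (2*ω^2) + (1-ν) * ‖ψ - f j‖^2 / (2*ω^2))) :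
    StrictConvexOn ℝ Set.univ J ∧ ∃! ψstar, ∀ ψ, J ψstar ≤ J ψ :=
  J_strictly_convex_unique_min_general n M hM Y f pi hpi ν ω hν hω J hJ
end
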